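/- For 1 ≤ i < j ≤ m, the action of the permutation s_i s_{i+1} ⋯ s_{j-1} (defined via the birational R-matrix action of the symmetric group) on the r-th coordinate of x_i satisfies s_i ⋯ s_{j-1}(x_i^{(r)}) = x_j^{(r+j-i)} σ̄_{(n-1)(j-i)}^{(r)}(x_i, ..., x_j) / σ̄_{(n-1)(j-i)}^{(r-1)}(x_i, ..., x_j), with upper indices mod n. -/

import Mathlib

/-!
Induction on `j - i`. Since `s_i ⋯ s_{j-1} = s_i (s_{i+1} ⋯ s_{j-1})`, the coordinate in question is
the first output of `η(x_i, y)`, where by induction `y^{(s)}` is `x_j^{(s+j-i-1)}` times a ratio of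
consecutive `σ̄^{(s)}(x_{i+1}, …, x_j)`. In `κ_ρ(x_i, y)` the products of consecutive coordinates of
`y` telescope, and expanding `σ̄(x_i, …, x_j)` along `x_i` identifies
`κ_ρ(x_i, y) = σ̄^{(ρ-1)}(x_i, …, x_j) / σ̄^{(ρ)}(x_{i+1}, …, x_j)`; the quotient `κ_{r+1} / κ_r`
then gives the formula.
-/

open Finset

noncomputable section BirationalR

/-- A vector of reals with cyclically indexed coordinates (upper index mod `n`). -/
abbrev Vec (n : ℕ) := ZMod n → ℝ

/-- `κ_r(a,b) = Σ_{j=r}^{r+n-1} (Π_{k=r+1}^{j} b_k)(Π_{k=j+1}^{r+n-1} a_k)`, indices mod `n`. -/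
def kappaF (n : ℕ) (r : ZMod n) (a b : Vec n) : ℝ :=
  ∑ d ∈ Finset.range n,
    (∏ t ∈ Finset.range d, b (r + 1 + (t : ℕ))) *
      ∏ t ∈ Finset.range (n - 1 - d), a (r + 1 + (d : ℕ) + (t : ℕ))

/-- First component `b'` of the birational R-matrix `η(a,b) = (b',a')`:
`b'_i = b_{i+1} κ_{i+1}(a,b)/κ_i(a,b)`. -/
def etaB (n : ℕ) (a b : Vec n) : Vec n :=
  fun i => b (i + 1) * kappaF n (i + 1) a b / kappaF n i a b

/-- Second component `a'` of `η(a,b) = (b',a')`: `a'_i = a_{i-1} κ_{i-1}(a,b)/κ_i(a,b)`. -/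
def etaA (n : ℕ) (a b : Vec n) : Vec n :=
  fun i => a (i - 1) * kappaF n (i - 1) a b / kappaF n i a b

/-- `η` applied to positions `(p, p+1)` of a tuple of vectors. -/
def etaAt (n : ℕ) (p : ℕ) (X : ℕ → Vec n) : ℕ → Vec n :=
  fun q => if q = p then etaB n (X p) (X (p + 1))
    else if q = p + 1 then etaA n (X p) (X (p + 1)) else X q

/-- Action of the word `s_{w₁} s_{w₂} ⋯ s_{wₗ}` (rightmost acts first). -/
def applyWord (n : ℕ) (w : List ℕ) (X : ℕ → Vec n) : ℕ → Vec n :=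
  w.foldr (etaAt n) X

/-- The tuple `(x_i, x_{i+1}, …, x_j)` as a list. -/
def seg {n : ℕ} (x : ℕ → Vec n) (i j : ℕ) : List (Vec n) :=
  (List.range (j + 1 - i)).map fun t => x (i + t)

/-- `τ_k^{(r)}(x_1,…,x_m)`: sum over weakly increasing `i_1 ≤ … ≤ i_k`, no index used
more than `n-1` times, of `x_{i_1}^{(r)} x_{i_2}^{(r-1)} ⋯ x_{i_k}^{(r-k+1)}`.
Encoded via multiplicity functions; `τ = 0` for negative `k`. -/
def tauF (n : ℕ) (r : ZMod n) (k : ℤ) (x : List (Vec n)) : ℝ :=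
  if 0 ≤ k then
    ∑ c ∈ (Fintype.piFinset fun _ : Fin x.length => Finset.range n).filter
        (fun c => ∑ i, c i = k.toNat),
      ∏ i : Fin x.length, ∏ β ∈ Finset.range (c i),
        x.get i (r - (∑ i' ∈ Finset.univ.filter (fun i' => i' < i), c i' : ℕ) - (β : ℕ))
  else 0

/-- `σ_k^{(r)}(x_1,…,x_m) = Σ_{t=0}^{k} x_1^{(r)} ⋯ x_1^{(r-t+1)} τ_{k-t}^{(r-t)}(x_2,…,x_m)`. -/
def sigmaF (n : ℕ) (r : ZMod n) (k : ℕ) : List (Vec n) → ℝ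
  | [] => if k = 0 then 1 else 0
  | y :: rest =>
      ∑ t ∈ Finset.range (k + 1),
        (∏ β ∈ Finset.range t, y (r - (β : ℕ))) * tauF n (r - (t : ℕ)) ((k : ℤ) - (t : ℤ)) rest

/-- `σ̄_k^{(r)}(x_1,…,x_m) = Σ_{t=0}^{k} τ_{k-t}^{(r)}(x_1,…,x_{m-1}) x_m^{(r-k+t)} ⋯ x_m^{(r-k+1)}`. -/
def sigmaBarF (n : ℕ) (r : ZMod n) (k : ℕ) : List (Vec n) → ℝ
  | [] => if k = 0 then 1 else 0
  | y :: rest =>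
      ∑ t ∈ Finset.range (k + 1),
        tauF n r ((k : ℤ) - (t : ℤ)) ((y :: rest).dropLast) *
          ∏ β ∈ Finset.range t,
            (y :: rest).getLast (List.cons_ne_nil y rest) (r - (k : ℕ) + 1 + (β : ℕ))

/-- `Ω_k^{(r)}(x_i,…,x_j) = Σ_{ℓ=0}^{n-1} σ^{(r)}_{(n-1)(k-i)+ℓ}(x_i,…,x_k)
σ̄^{(r+k-i-ℓ)}_{(n-1)(j-k)-ℓ}(x_{k+1},…,x_j)`. -/
def OmegaF (n : ℕ) (r : ZMod n) (k i j : ℕ) (x : ℕ → Vec n) : ℝ :=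
  ∑ ℓ ∈ Finset.range n,
    sigmaF n r ((n - 1) * (k - i) + ℓ) (seg x i k) *
      sigmaBarF n (r + (k : ℕ) - (i : ℕ) - (ℓ : ℕ)) ((n - 1) * (j - k) - ℓ) (seg x (k + 1) j)

/-- `P_k^{(r)}(x_i,…,x_j) = Σ_{t=0}^{k} (Π_{s=0}^{t-1} x_i^{(r-s)})
σ_{(n-1)(j-i-1)}^{(r-t)}(x_i,…,x_{j-1}) (Π_{s=0}^{k-t-1} x_j^{(r-t+j-i-1-s)})`. -/
def PF (n : ℕ) (r : ZMod n) (k i j : ℕ) (x : ℕ → Vec n) : ℝ :=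
  ∑ t ∈ Finset.range (k + 1),
    (∏ s ∈ Finset.range t, x i (r - (s : ℕ))) *
      sigmaF n (r - (t : ℕ)) ((n - 1) * (j - i - 1)) (seg x i (j - 1)) *
      ∏ s ∈ Finset.range (k - t), x j (r - (t : ℕ) + (j : ℕ) - (i : ℕ) - 1 - (s : ℕ))

end BirationalR

lemma sum_piFinset_fin_succ {α M : Type*} [AddCommMonoid M] {m : ℕ} (s : Finset α)
    (f : (Fin (m + 1) → α) → M) :
    ∑ c ∈ Fintype.piFinset (fun _ => s), f c =
      ∑ a ∈ s, ∑ c ∈ Fintype.piFinset (fun _ => s), f (Fin.cons a c) := by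
  have h := filter_piFinset_eq_map_consEquiv (fun _ : Fin (m + 1) => s) (fun _ => True)
  simp only [filter_true] at h
  rw [h, sum_map, sum_product]
  rfl

lemma sum_range_eq_of_eq_zero_outside {M : Type*} [AddCommMonoid M] (f : ℕ → M) (e N a : ℕ)
    (hlow : ∀ u < e, f u = 0) (hhigh : ∀ u, N ≤ u → f (e + u) = 0) :
    ∑ u ∈ range (e + (N + a)), f u = ∑ t ∈ range N, f (e + t) := by
  rw [sum_range_add, sum_eq_zero fun u hu => hlow u (mem_range.1 hu), zero_add, sum_range_add,
    sum_eq_zero fun s _ => hhigh (N + s) (Nat.le_add_right _ _), add_zero]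

lemma ZMod.natCast_eq_neg_of_add_eq_mul {n a b c : ℕ} (h : a + b = n * c) :
    (a : ZMod n) = -(b : ZMod n) :=
  eq_neg_of_add_eq_zero_left (by rw [← Nat.cast_add, h, Nat.cast_mul, ZMod.natCast_self, zero_mul])

lemma prod_range_telescope {R K : Type*} [CommRing R] [Field K] {b c S : R → K}
    (hS : ∀ s, S s ≠ 0) (hb : ∀ s, b s = c s * S s / S (s - 1)) (ρ : R) (e : ℕ) :
    ∏ t ∈ range e, b (ρ + 1 + t) = (∏ t ∈ range e, c (ρ + 1 + t)) * S (ρ + e) / S ρ := by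
  induction e with
  | zero => simp [hS ρ]
  | succ e ih =>
    have hsub : ρ + 1 + (e : R) - 1 = ρ + e := by ring
    have hsucc : ρ + ((e + 1 : ℕ) : R) = ρ + 1 + e := by push_cast; ring
    rw [prod_range_succ, ih, prod_range_succ, hb, hsub, hsucc]
    have := hS (ρ + e)
    field_simp

section

variable {n : ℕ}

def tauMonomial (n : ℕ) (r : ZMod n) (x : List (Vec n)) (c : Fin x.length → ℕ) : ℝ :=
  ∏ i : Fin x.length, ∏ β ∈ range (c i),
    x.get i (r - (∑ i' ∈ univ.filter (fun i' => i' < i), c i' : ℕ) - (β : ℕ))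

lemma tauF_eq_sum_ite (r : ZMod n) (k : ℤ) (x : List (Vec n)) :
    tauF n r k x = ∑ c ∈ Fintype.piFinset (fun _ => range n),
      if ((∑ i, c i : ℕ) : ℤ) = k then tauMonomial n r x c else 0 := by
  rw [tauF]
  split_ifs with hk
  · rw [sum_filter]
    exact sum_congr rfl fun c _ => if_congr (by omega) rfl rfl
  · exact (sum_eq_zero fun c _ => if_neg (by omega)).symm

lemma tauF_of_neg (r : ZMod n) {k : ℤ} (hk : k < 0) (x : List (Vec n)) : tauF n r k x = 0 := by
  simp only [tauF, if_neg (not_le.2 hk)]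

lemma tauF_zero (hn : 0 < n) (r : ZMod n) (x : List (Vec n)) : tauF n r 0 x = 1 := by
  rw [tauF_eq_sum_ite, sum_eq_single 0]
  · simp [tauMonomial]
  · intro c _ hc
    exact if_neg fun hsum =>
      hc (funext fun i => sum_eq_zero_iff.1 (by exact_mod_cast hsum) i (mem_univ i))
  · exact fun h => (h (Fintype.mem_piFinset.2 fun _ => mem_range.2 hn)).elim

lemma tauF_nonneg (r : ZMod n) (k : ℤ) {x : List (Vec n)} (hx : ∀ v ∈ x, ∀ s, 0 < v s) :
    0 ≤ tauF n r k x := by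
  rw [tauF_eq_sum_ite]
  refine sum_nonneg fun c _ => ?_
  split_ifs
  · exact prod_nonneg fun i _ => prod_nonneg fun β _ => (hx _ (List.get_mem x i) _).le
  · exact le_rfl

lemma tauF_eq_zero_of_lt (r : ZMod n) {k : ℤ} {x : List (Vec n)}
    (hk : (((n - 1) * x.length : ℕ) : ℤ) < k) : tauF n r k x = 0 := by
  rw [tauF_eq_sum_ite]
  refine sum_eq_zero fun c hc => if_neg ?_
  have hle : ∑ i, c i ≤ (n - 1) * x.length := calc
    ∑ i, c i ≤ ∑ _i : Fin x.length, (n - 1) :=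
      sum_le_sum fun i _ => Nat.le_sub_one_of_lt (mem_range.1 (Fintype.mem_piFinset.1 hc i))
    _ = (n - 1) * x.length := by simp [mul_comm]
  omega

lemma tauMonomial_cons (r : ZMod n) (y : Vec n) (x : List (Vec n)) (a : ℕ)
    (c : Fin x.length → ℕ) :
    tauMonomial n r (y :: x) (Fin.cons a c) =
      (∏ β ∈ range a, y (r - (β : ℕ))) * tauMonomial n (r - (a : ℕ)) x c := by
  refine (Fin.prod_univ_succ (n := x.length) _).trans (congrArg₂ (· * ·) ?_ ?_)
  · simp
    rfl
  · refine prod_congr rfl fun i _ => prod_congr rfl fun β _ => congrArg (x.get i) ?_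
    have hsum : ∑ i' ∈ univ.filter (fun i' : Fin (y :: x).length => i' < i.succ),
        (Fin.cons a c : Fin (x.length + 1) → ℕ) i' =
        a + ∑ i' ∈ univ.filter (fun i' => i' < i), c i' := by
      rw [sum_filter, sum_filter]
      refine (Fin.sum_univ_succ (n := x.length) _).trans ?_
      simp [Fin.succ_lt_succ_iff, Fin.succ_pos]
    rw [hsum]
    push_cast
    ring

lemma tauF_cons (r : ZMod n) (k : ℤ) (y : Vec n) (x : List (Vec n)) :
    tauF n r k (y :: x) =
      ∑ a ∈ range n, (∏ β ∈ range a, y (r - (β : ℕ))) * tauF n (r - (a : ℕ)) (k - a) x := by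
  rw [tauF_eq_sum_ite]
  refine (sum_piFinset_fin_succ _ _).trans (sum_congr rfl fun a _ => ?_)
  rw [tauF_eq_sum_ite, mul_sum]
  refine sum_congr rfl fun c _ => ?_
  have hcons : ∑ i : Fin (y :: x).length, (Fin.cons a c : Fin (x.length + 1) → ℕ) i =
      a + ∑ i, c i := Fin.sum_cons a c
  rw [hcons, tauMonomial_cons, mul_ite, mul_zero]
  exact if_congr (by push_cast; omega) rfl rfl

lemma sigmaBarF_of_ne_nil (r : ZMod n) (k : ℕ) {L : List (Vec n)} (hL : L ≠ []) :
    sigmaBarF n r k L = ∑ t ∈ range (k + 1), tauF n r ((k : ℤ) - t) L.dropLast *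
      ∏ β ∈ range t, L.getLast hL (r - (k : ℕ) + 1 + (β : ℕ)) := by
  cases L with
  | nil => exact absurd rfl hL
  | cons y rest => rfl

lemma sigmaBarF_pos (hn : 0 < n) (r : ZMod n) (k : ℕ) {L : List (Vec n)} (hL : L ≠ [])
    (hx : ∀ v ∈ L, ∀ s, 0 < v s) : 0 < sigmaBarF n r k L := by
  have hx' : ∀ v ∈ L.dropLast, ∀ s, 0 < v s := fun v hv => hx v (List.mem_of_mem_dropLast hv)
  have hz : ∀ s, 0 < L.getLast hL s := hx _ (List.getLast_mem hL)
  rw [sigmaBarF_of_ne_nil r k hL]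
  refine sum_pos' (fun t _ => mul_nonneg (tauF_nonneg _ _ hx') (prod_nonneg fun β _ => (hz _).le))
    ⟨k, self_mem_range_succ k, ?_⟩
  rw [sub_self, tauF_zero hn, one_mul]
  exact prod_pos fun β _ => hz _

/-- The vanishing of `τ_k` for `k` outside `[0, (n-1)·length]` removes the terms that do not
come from `σ̄(L)`. -/
lemma sigmaBarF_cons (ρ : ZMod n) (y : Vec n) {L : List (Vec n)} (hL : L ≠ []) {d : ℕ}
    (hd : L.length = d + 1) :
    sigmaBarF n ρ ((n - 1) * (d + 1)) (y :: L) =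
      ∑ a ∈ range n, (∏ β ∈ range a, y (ρ - (β : ℕ))) * sigmaBarF n (ρ - (a : ℕ)) ((n - 1) * d) L *
        ∏ β ∈ range (n - 1 - a), L.getLast hL (ρ - ((n - 1) * (d + 1) : ℕ) + 1 + (β : ℕ)) := by
  set k := (n - 1) * (d + 1) with hk
  set K := (n - 1) * d with hK
  have hkK : k = K + (n - 1) := by rw [hk, hK, Nat.mul_succ]
  have hD : L.dropLast.length = d := by rw [List.length_dropLast, hd]; omega
  clear_value k K
  rw [sigmaBarF_of_ne_nil ρ k (List.cons_ne_nil y L)]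
  simp only [List.dropLast_cons_of_ne_nil hL, List.getLast_cons hL, tauF_cons, sum_mul]
  rw [sum_comm]
  refine sum_congr rfl fun a ha => ?_
  have ha : a < n := mem_range.1 ha
  rw [sigmaBarF_of_ne_nil _ K hL]
  simp only [mul_assoc]
  rw [← mul_sum, sum_mul]
  congr 1
  rw [show k + 1 = (n - 1 - a) + ((K + 1) + a) by omega, sum_range_eq_of_eq_zero_outside]
  · refine sum_congr rfl fun t _ => ?_
    rw [show (k : ℤ) - ((n - 1 - a + t : ℕ) : ℤ) - a = K - t by push_cast; omega, prod_range_add]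
    have hshift : ((k : ℕ) : ZMod n) = (K : ℕ) + (a : ℕ) + ((n - 1 - a : ℕ) : ZMod n) := by
      rw [← Nat.cast_add, ← Nat.cast_add]
      exact congrArg _ (by omega)
    have hz : ∀ β ∈ range t, L.getLast hL (ρ - (k : ℕ) + 1 + ((n - 1 - a + β : ℕ) : ZMod n)) =
        L.getLast hL (ρ - (a : ℕ) - (K : ℕ) + 1 + (β : ℕ)) := fun β _ =>
      congrArg _ (by rw [Nat.cast_add, hshift]; ring)
    rw [prod_congr rfl hz]
    ring
  · intro u hu
    rw [tauF_eq_zero_of_lt _ (by rw [hD, ← hK]; omega), zero_mul]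
  · intro u hu
    rw [tauF_of_neg _ (by push_cast; omega), zero_mul]

/-- The inductive step: `hb` is the theorem for the tuple `L`, `b` being the image of its first
vector. -/
lemma kappaF_eq_sigmaBarF_div (hn : 0 < n) (ρ : ZMod n) (y : Vec n) {L : List (Vec n)}
    (hL : L ≠ []) (hx : ∀ v ∈ L, ∀ s, 0 < v s) {d : ℕ} (hd : L.length = d + 1) {b : Vec n}
    (hb : ∀ s, b s = L.getLast hL (s + d) * sigmaBarF n s ((n - 1) * d) L /
      sigmaBarF n (s - 1) ((n - 1) * d) L) :
    kappaF n ρ y b =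
      sigmaBarF n (ρ - 1) ((n - 1) * (d + 1)) (y :: L) / sigmaBarF n ρ ((n - 1) * d) L := by
  set S : ZMod n → ℝ := fun s => sigmaBarF n s ((n - 1) * d) L
  have hS : ∀ s, S s ≠ 0 := fun s => (sigmaBarF_pos hn s _ hL hx).ne'
  rw [kappaF, sigmaBarF_cons _ y hL hd, sum_div]
  conv_rhs => rw [← sum_range_reflect]
  refine sum_congr rfl fun e he => ?_
  have he : e < n := mem_range.1 he
  have hy : ∏ t ∈ range (n - 1 - e), y (ρ + 1 + e + t) =
      ∏ β ∈ range (n - 1 - e), y (ρ - 1 - (β : ℕ)) := by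
    rw [← prod_range_reflect (fun β : ℕ => y (ρ - 1 - (β : ℕ))) (n - 1 - e)]
    refine prod_congr rfl fun t ht => congrArg y ?_
    rw [ZMod.natCast_eq_neg_of_add_eq_mul (a := n - 1 - e - 1 - t) (b := t + e + 2) (c := 1)
      (by have := mem_range.1 ht; omega)]
    push_cast
    ring
  have hS' : S (ρ + e) = S (ρ - 1 - (n - 1 - e : ℕ)) := congrArg S <| by
    rw [ZMod.natCast_eq_neg_of_add_eq_mul (a := n - 1 - e) (b := e + 1) (c := 1) (by omega)]
    push_cast
    ring
  have hz : ∏ t ∈ range e, L.getLast hL (ρ + 1 + t + d) =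
      ∏ β ∈ range e, L.getLast hL (ρ - 1 - ((n - 1) * (d + 1) : ℕ) + 1 + β) := by
    refine prod_congr rfl fun t _ => congrArg _ ?_
    rw [ZMod.natCast_eq_neg_of_add_eq_mul (a := (n - 1) * (d + 1)) (b := d + 1) (c := d + 1)
      (by rw [← Nat.succ_mul, Nat.succ_eq_add_one, Nat.sub_add_cancel hn])]
    push_cast
    ring
  rw [prod_range_telescope (c := fun s => L.getLast hL (s + d)) hS hb, hy, hz, hS',
    show n - 1 - (n - 1 - e) = e by omega]
  ring

lemma seg_self (X : ℕ → Vec n) (i : ℕ) : seg X i i = [X i] := by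
  rw [seg, Nat.add_sub_cancel_left]
  simp

lemma seg_length (X : ℕ → Vec n) (i j : ℕ) : (seg X i j).length = j + 1 - i := by
  simp [seg]

lemma seg_ne_nil (X : ℕ → Vec n) {i j : ℕ} (h : i ≤ j) : seg X i j ≠ [] := by
  rw [← List.length_pos_iff, seg_length]
  omega

lemma seg_eq_cons (X : ℕ → Vec n) {i j : ℕ} (h : i ≤ j) : seg X i j = X i :: seg X (i + 1) j := by
  rw [seg, seg, show j + 1 - i = (j - i) + 1 by omega, show j + 1 - (i + 1) = j - i by omega,
    List.range_succ_eq_map, List.map_cons, List.map_map]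
  congr 1
  exact List.map_congr_left fun t _ => congrArg X (by omega)

lemma seg_getLast (X : ℕ → Vec n) {i j : ℕ} (h : i ≤ j) (hne : seg X i j ≠ []) :
    (seg X i j).getLast hne = X j := by
  simp only [List.getLast_eq_getElem, seg, List.getElem_map, List.getElem_range, List.length_map,
    List.length_range]
  exact congrArg X (by omega)

lemma seg_pos {X : ℕ → Vec n} (hX : ∀ p r, 0 < X p r) (i j : ℕ) :
    ∀ v ∈ seg X i j, ∀ s, 0 < v s := by
  simp only [seg, List.mem_map]
  rintro v ⟨t, _, rfl⟩ s
  exact hX _ _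

lemma applyWord_cons (p : ℕ) (w : List ℕ) (X : ℕ → Vec n) :
    applyWord n (p :: w) X = etaAt n p (applyWord n w X) := rfl

lemma applyWord_of_forall_lt {w : List ℕ} (X : ℕ → Vec n) {q : ℕ} (h : ∀ p ∈ w, q < p) :
    applyWord n w X q = X q := by
  induction w with
  | nil => rfl
  | cons p w ih =>
    have hq := h p List.mem_cons_self
    rw [applyWord_cons, etaAt, if_neg (by omega), if_neg (by omega)]
    exact ih fun p' hp' => h p' (List.mem_cons_of_mem _ hp')

lemma applyWord_range'_apply_self (hn : 0 < n) {X : ℕ → Vec n} (hX : ∀ p r, 0 < X p r) (d i : ℕ)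
    (r : ZMod n) :
    applyWord n (List.range' i d) X i r =
      X (i + d) (r + d) * sigmaBarF n r ((n - 1) * d) (seg X i (i + d)) /
        sigmaBarF n (r - 1) ((n - 1) * d) (seg X i (i + d)) := by
  induction d generalizing i r with
  | zero =>
    have hone : ∀ s, sigmaBarF n s 0 [X i] = 1 := fun s => by
      simp [sigmaBarF, tauF_zero hn]
    simp [applyWord, seg_self, hone]
  | succ d ih =>
    rw [List.range'_succ, applyWord_cons, etaAt, if_pos rfl]
    set Y := applyWord n (List.range' (i + 1) d) X
    set L := seg X (i + 1) (i + 1 + d)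
    have hL : L ≠ [] := seg_ne_nil X (by omega)
    have hLd : L.length = d + 1 := by rw [seg_length]; omega
    have hseg : seg X i (i + (d + 1)) = X i :: L := by
      rw [seg_eq_cons X (by omega), show i + (d + 1) = i + 1 + d by omega]
    have hYi : Y i = X i := applyWord_of_forall_lt X fun p hp => by
      have := List.mem_range'_1.1 hp
      omega
    have hY : ∀ s, Y (i + 1) s = L.getLast hL (s + d) * sigmaBarF n s ((n - 1) * d) L /
        sigmaBarF n (s - 1) ((n - 1) * d) L := fun s => by
      rw [seg_getLast X (by omega)]
      exact ih (i + 1) s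
    have hκ : ∀ ρ, kappaF n ρ (X i) (Y (i + 1)) =
        sigmaBarF n (ρ - 1) ((n - 1) * (d + 1)) (X i :: L) / sigmaBarF n ρ ((n - 1) * d) L :=
      fun ρ => kappaF_eq_sigmaBarF_div hn ρ (X i) hL (seg_pos hX _ _) hLd hY
    have hpos : ∀ s, 0 < sigmaBarF n s ((n - 1) * d) L :=
      fun s => sigmaBarF_pos hn s _ hL (seg_pos hX _ _)
    have hpos' : ∀ s, 0 < sigmaBarF n s ((n - 1) * (d + 1)) (X i :: L) :=
      fun s => sigmaBarF_pos hn s _ (List.cons_ne_nil _ _) (hseg ▸ seg_pos hX _ _)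
    rw [hYi, etaB, hY, hκ, hκ, hseg,
      seg_getLast X (by omega), add_sub_cancel_right, show i + 1 + d = i + (d + 1) by omega,
      add_assoc r, add_comm 1, Nat.cast_succ]
    have := (hpos r).ne'
    have := (hpos (r + 1)).ne'
    have := (hpos' r).ne'
    have := (hpos' (r - 1)).ne'
    field_simp

end

theorem one_shift_dual_general (n : ℕ) (hn : 2 ≤ n) (X : ℕ → Vec n)
    (hX : ∀ p r, 0 < X p r) (i j : ℕ) (hij : i < j)
    (r : ZMod n) :
    applyWord n (List.range' i (j - i)) X i r =
      X j (r + (j : ℕ) - (i : ℕ)) *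
        sigmaBarF n r ((n - 1) * (j - i)) (seg X i j) /
        sigmaBarF n (r - 1) ((n - 1) * (j - i)) (seg X i j) := by
  have h := applyWord_range'_apply_self (by omega) hX (j - i) i r
  rwa [Nat.add_sub_cancel' hij.le, Nat.cast_sub hij.le, ← add_sub_assoc] at h

/-- for `1 ≤ i < j ≤ m`,
`s_i ⋯ s_{j-1}(x_i^{(r)}) = x_j^{(r+j-i)} σ̄_{(n-1)(j-i)}^{(r)}(x_i,…,x_j) /
σ̄_{(n-1)(j-i)}^{(r-1)}(x_i,…,x_j)`. -/
theorem one_shift_dual (n : ℕ) (hn : 2 ≤ n) (m : ℕ) (X : ℕ → Vec n)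
    (hX : ∀ p r, 0 < X p r) (i j : ℕ) (hi : 1 ≤ i) (hij : i < j) (hjm : j ≤ m)
    (r : ZMod n) :
    applyWord n (List.range' i (j - i)) X i r =
      X j (r + (j : ℕ) - (i : ℕ)) *
        sigmaBarF n r ((n - 1) * (j - i)) (seg X i j) /
        sigmaBarF n (r - 1) ((n - 1) * (j - i)) (seg X i j) :=
  one_shift_dual_general n hn X hX i j hij r
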